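/- Let 0 < θ_c < π and let γ = 1/sin²(θ_c/2). Then for every θ with θ_c ≤ θ ≤ π, γ · ∫_{θ_c}^{θ} cos(φ/2) · √(sin((φ+θ_c)/2)) · √(sin((φ−θ_c)/2)) dφ ≥ (1/(12π)) · √(γ(γ−1)) · (θ − θ_c)². -/

import Mathlib

open Real intervalIntegral

/-!
Since `γ - 1 = cot² (θc/2)`, the constant `√(γ(γ-1))` is `γ cos (θc/2)`. On `[θc, π]` the integrand
dominates `cos (φ/2) sin ((φ-θc)/2)`, because the first square root is the larger of the two, and
Jordan's inequality bounds this below by the quadratic `(π-φ)(φ-θc)/π²`, whose integral is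
explicit. The estimate then closes with `cos (θc/2) ≤ (π-θc)/2` and `π ≤ 4`.
-/

lemma sqrt_inv_sin_sq_mul_inv_sin_sq_sub_one {x : ℝ} (hx : 0 ≤ cos x) :
    √(1 / sin x ^ 2 * (1 / sin x ^ 2 - 1)) = 1 / sin x ^ 2 * cos x := by
  rcases eq_or_ne (sin x) 0 with hs | hs
  · simp [hs]
  · have hsq : 1 / sin x ^ 2 * (1 / sin x ^ 2 - 1) = (1 / sin x ^ 2 * cos x) ^ 2 := by
      field_simp
      linear_combination -sin_sq_add_cos_sq x
    rw [hsq, sqrt_sq (by positivity)]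

lemma one_sub_div_pi_le_cos_half {φ : ℝ} (h₀ : 0 ≤ φ) (hπ : φ ≤ π) : 1 - φ / π ≤ cos (φ / 2) := by
  have := one_sub_mul_le_cos (x := φ / 2) (by linarith) (by linarith)
  calc 1 - φ / π = 1 - 2 / π * (φ / 2) := by ring
    _ ≤ cos (φ / 2) := this

lemma div_pi_le_sin_half {x : ℝ} (h₀ : 0 ≤ x) (hπ : x ≤ π) : x / π ≤ sin (x / 2) := by
  have := mul_le_sin (x := x / 2) (by linarith) (by linarith)
  calc x / π = 2 / π * (x / 2) := by ring
    _ ≤ sin (x / 2) := this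

lemma sin_half_sub_le_sin_half_add {φ ψ : ℝ} (hψ : 0 ≤ sin (ψ / 2)) (hφ : 0 ≤ cos (φ / 2)) :
    sin ((φ - ψ) / 2) ≤ sin ((φ + ψ) / 2) := by
  have h := sin_sub_sin ((φ + ψ) / 2) ((φ - ψ) / 2)
  rw [show ((φ + ψ) / 2 - (φ - ψ) / 2) / 2 = ψ / 2 by ring,
    show ((φ + ψ) / 2 + (φ - ψ) / 2) / 2 = φ / 2 by ring] at h
  nlinarith [mul_nonneg hψ hφ]

lemma le_sqrt_mul_sqrt_of_le {a b : ℝ} (ha : 0 ≤ a) (hab : a ≤ b) : a ≤ √b * √a := by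
  calc a = √a * √a := (mul_self_sqrt ha).symm
    _ ≤ √b * √a := by gcongr

lemma sub_mul_sub_div_pi_sq_le {θc φ : ℝ} (hθc : 0 ≤ θc) (hθcφ : θc ≤ φ) (hφ : φ ≤ π) :
    (π - φ) * (φ - θc) / π ^ 2
      ≤ cos (φ / 2) * √(sin ((φ + θc) / 2)) * √(sin ((φ - θc) / 2)) := by
  have hcos : 0 ≤ cos (φ / 2) := cos_nonneg_of_mem_Icc ⟨by linarith [pi_pos], by linarith⟩
  have hsin : 0 ≤ sin ((φ - θc) / 2) := sin_nonneg_of_nonneg_of_le_pi (by linarith) (by linarith)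
  have hmono := sin_half_sub_le_sin_half_add
    (sin_nonneg_of_nonneg_of_le_pi (by linarith) (by linarith)) hcos (φ := φ) (ψ := θc)
  calc (π - φ) * (φ - θc) / π ^ 2 = (1 - φ / π) * ((φ - θc) / π) := by field_simp
    _ ≤ cos (φ / 2) * sin ((φ - θc) / 2) := by
      gcongr
      · exact one_sub_div_pi_le_cos_half (by linarith) hφ
      · exact div_pi_le_sin_half (by linarith) (by linarith)
    _ ≤ cos (φ / 2) * (√(sin ((φ + θc) / 2)) * √(sin ((φ - θc) / 2))) := by
      gcongr
      exact le_sqrt_mul_sqrt_of_le hsin hmono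
    _ = _ := by ring

lemma integral_sub_mul_sub (a b p : ℝ) :
    ∫ φ in a..b, (p - φ) * (φ - a) = (p - a) * (b - a) ^ 2 / 2 - (b - a) ^ 3 / 3 := by
  have h : ∀ φ, (p - φ) * (φ - a) = (p - a) * (φ - a) - (φ - a) ^ 2 := fun φ => by ring
  simp only [h]
  rw [integral_sub (Continuous.intervalIntegrable (by fun_prop) _ _)
    (Continuous.intervalIntegrable (by fun_prop) _ _), integral_const_mul,
    integral_comp_sub_right (fun x => x), integral_comp_sub_right (fun x => x ^ 2)]
  simp only [sub_self, integral_id, integral_pow]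
  ring

lemma sub_mul_sq_div_le_integral {θc θ : ℝ} (hθc : 0 ≤ θc) (hθcθ : θc ≤ θ) (hθ : θ ≤ π) :
    ((π - θc) * (θ - θc) ^ 2 / 2 - (θ - θc) ^ 3 / 3) / π ^ 2
      ≤ ∫ φ in θc..θ, cos (φ / 2) * √(sin ((φ + θc) / 2)) * √(sin ((φ - θc) / 2)) := by
  rw [← integral_sub_mul_sub, ← integral_div]
  exact integral_mono_on hθcθ (Continuous.intervalIntegrable (by fun_prop) _ _)
    (Continuous.intervalIntegrable (by fun_prop) _ _)
    fun φ hφ => sub_mul_sub_div_pi_sq_le hθc hφ.1 (hφ.2.trans hθ)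

lemma cos_half_le_pi_sub_div_two {x : ℝ} (hx : x ≤ π) : cos (x / 2) ≤ (π - x) / 2 := by
  rw [← sin_pi_div_two_sub, show π / 2 - x / 2 = (π - x) / 2 by ring]
  exact sin_le (by linarith)

lemma cos_half_mul_sq_div_le {θc θ : ℝ} (hθcθ : θc ≤ θ) (hθ : θ ≤ π) :
    cos (θc / 2) * (θ - θc) ^ 2 / (12 * π)
      ≤ ((π - θc) * (θ - θc) ^ 2 / 2 - (θ - θc) ^ 3 / 3) / π ^ 2 := by
  have hc := cos_half_le_pi_sub_div_two (hθcθ.trans hθ)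
  have hπ := pi_pos
  have hπ4 := pi_le_four
  rw [div_le_div_iff₀ (by positivity) (by positivity)]
  have hL : 0 ≤ (θ - θc) ^ 2 := sq_nonneg _
  nlinarith [mul_nonneg hL (sub_nonneg.2 hc), mul_nonneg hL (sub_nonneg.2 hθ),
    mul_nonneg (mul_nonneg hL (sub_nonneg.2 (hθcθ.trans hθ))) (sub_nonneg.2 hπ4)]

theorem alpha_lower_bound
    (θc : ℝ) (hθc0 : 0 < θc)
    (γ : ℝ) (hγ : γ = 1 / Real.sin (θc / 2) ^ 2)
    (θ : ℝ) (hθ1 : θc ≤ θ) (hθ2 : θ ≤ Real.pi) :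
    (1 / (12 * Real.pi)) * Real.sqrt (γ * (γ - 1)) * (θ - θc) ^ 2
      ≤ γ * ∫ φ in θc..θ,
          Real.cos (φ / 2) * Real.sqrt (Real.sin ((φ + θc) / 2))
            * Real.sqrt (Real.sin ((φ - θc) / 2)) := by
  have hcos : 0 ≤ cos (θc / 2) :=
    cos_nonneg_of_mem_Icc ⟨by linarith [pi_pos], by linarith⟩
  rw [hγ, sqrt_inv_sin_sq_mul_inv_sin_sq_sub_one hcos]
  calc 1 / (12 * π) * (1 / sin (θc / 2) ^ 2 * cos (θc / 2)) * (θ - θc) ^ 2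
      = 1 / sin (θc / 2) ^ 2 * (cos (θc / 2) * (θ - θc) ^ 2 / (12 * π)) := by ring
    _ ≤ _ := by
      gcongr
      exact (cos_half_mul_sq_div_le hθ1 hθ2).trans (sub_mul_sq_div_le_integral hθc0.le hθ1 hθ2)
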